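/- For U ∈ D_{p,q} and k ∈ {1,…,n}, the product U · U^{(k)} contains no terms involving the generator e_k; that is, the coefficient of e_A in U · U^{(k)} is zero for every subset A with k ∈ A. -/

import Mathlib

open Finset
open scoped symmDiff

noncomputable section

/-- Sign of the `i`-th generator: `+1` if `i < p`, `-1` otherwise. -/
def eps (p : ℕ) {n : ℕ} (i : Fin n) : ℝ := if (i : ℕ) < p then 1 else -1

lemma eps_mul_self (p : ℕ) {n : ℕ} (i : Fin n) : eps p i * eps p i = 1 := by
  unfold eps; split <;> norm_num

/-- Structure constant `σ(A,B) = ∏_{i ∈ A ∩ B} ε_i`. -/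
def sgn (p : ℕ) {n : ℕ} (A B : Finset (Fin n)) : ℝ := ∏ i ∈ A ∩ B, eps p i

/-- The commutative analogue of a Clifford algebra `D_{p,q}`, realized as the space of
coefficient functions on the basis `{e_A : A ⊆ {1,…,n}}`, `n = p + q`, with multiplication
`e_A e_B = σ(A,B) e_{A Δ B}`. -/
def Dl (p q : ℕ) : Type := Finset (Fin (p + q)) → ℝ

namespace Dl

variable {p q : ℕ}

instance : AddCommGroup (Dl p q) := Pi.addCommGroup
instance : Module ℝ (Dl p q) := Pi.module _ _ _

/-- Multiplication: `(U·V)_C = ∑_{A Δ B = C} σ(A,B) U_A V_B`. -/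
def mul' (U V : Dl p q) : Dl p q :=
  fun C => ∑ A : Finset (Fin (p + q)), sgn p A (A ∆ C) * U A * V (A ∆ C)

/-- The unit `1 = e_∅`. -/
def one' : Dl p q := fun A => if A = ∅ then 1 else 0

lemma sgn_empty_left {n : ℕ} (B : Finset (Fin n)) : sgn p ∅ B = 1 := by
  simp [sgn]

lemma sgn_empty_right {n : ℕ} (A : Finset (Fin n)) : sgn p A ∅ = 1 := by
  simp [sgn]

lemma sgn_prod_ite {n : ℕ} (X Y : Finset (Fin n)) :
    sgn p X Y = ∏ i : Fin n, (if i ∈ X ∩ Y then eps p i else 1) := by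
  rw [Finset.prod_ite_mem, Finset.univ_inter, sgn]

lemma sgn_cocycle {n : ℕ} (p : ℕ) (A B C : Finset (Fin n)) :
    sgn p B (B ∆ C) * sgn p A (A ∆ B) = sgn p A (A ∆ C) * sgn p (A ∆ B) (B ∆ C) := by
  rw [sgn_prod_ite, sgn_prod_ite, sgn_prod_ite, sgn_prod_ite,
    ← Finset.prod_mul_distrib, ← Finset.prod_mul_distrib]
  refine Finset.prod_congr rfl fun i _ => ?_
  by_cases hA : i ∈ A <;> by_cases hB : i ∈ B <;> by_cases hC : i ∈ C <;>
    simp [Finset.mem_inter, Finset.mem_symmDiff, hA, hB, hC]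

lemma sd_helper {n : ℕ} (A B C : Finset (Fin n)) : (A ∆ B) ∆ (A ∆ C) = B ∆ C := by
  rw [symmDiff_comm A B, symmDiff_assoc, symmDiff_symmDiff_cancel_left]

theorem mul_comm' (U V : Dl p q) : mul' U V = mul' V U := by
  funext C
  refine Fintype.sum_equiv
    (Function.Involutive.toPerm (fun A => A ∆ C)
      (by intro A; exact symmDiff_symmDiff_cancel_right C A)) _ _ fun A => ?_
  change sgn p A (A ∆ C) * U A * V (A ∆ C) = sgn p (A ∆ C) (A ∆ C ∆ C) * V (A ∆ C) * U (A ∆ C ∆ C)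
  rw [symmDiff_symmDiff_cancel_right]
  rw [show sgn p A (A ∆ C) = sgn p (A ∆ C) A by rw [sgn, sgn, Finset.inter_comm]]
  ring

theorem mul_assoc' (U V W : Dl p q) : mul' (mul' U V) W = mul' U (mul' V W) := by
  funext C
  show ∑ B : Finset (Fin (p+q)), sgn p B (B ∆ C) * (mul' U V) B * W (B ∆ C)
      = ∑ A : Finset (Fin (p+q)), sgn p A (A ∆ C) * U A * (mul' V W) (A ∆ C)
  unfold mul'
  simp only [Finset.sum_mul, Finset.mul_sum]
  rw [Finset.sum_comm]
  refine Finset.sum_congr rfl fun A _ => ?_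
  refine Fintype.sum_equiv
    (Function.Involutive.toPerm (fun B => A ∆ B)
      (by intro B; exact symmDiff_symmDiff_cancel_left A B)) _ _ fun B => ?_
  change sgn p B (B ∆ C) * (sgn p A (A ∆ B) * U A * V (A ∆ B)) * W (B ∆ C) =
    sgn p A (A ∆ C) * U A * (sgn p (A ∆ B) (A ∆ B ∆ (A ∆ C)) * V (A ∆ B) * W (A ∆ B ∆ (A ∆ C)))
  rw [sd_helper]
  have h := sgn_cocycle p A B C
  linear_combination (U A * V (A ∆ B) * W (B ∆ C)) * h

theorem one_mul' (U : Dl p q) : mul' one' U = U := by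
  funext C
  unfold mul' one'
  rw [Finset.sum_eq_single (∅ : Finset (Fin (p+q)))]
  · simp [sgn_empty_left, bot_eq_empty.symm ▸ (bot_symmDiff C : (⊥ : Finset (Fin (p+q))) ∆ C = C)]
  · intro A _ hA; simp [hA]
  · simp

theorem mul_one' (U : Dl p q) : mul' U one' = U := by
  funext C
  unfold mul' one'
  rw [Finset.sum_eq_single C]
  · simp [sgn, symmDiff_self, bot_eq_empty]
  · intro A _ hA
    have : A ∆ C ≠ ∅ := fun h =>
      hA (symmDiff_eq_bot.mp (by simpa [Finset.bot_eq_empty] using h))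
    simp [this]
  · simp

theorem zero_mul' (U : Dl p q) : mul' 0 U = 0 := by
  funext C; unfold mul'
  simp [show ∀ A, (0 : Dl p q) A = 0 from fun _ => rfl]

theorem mul_zero' (U : Dl p q) : mul' U 0 = 0 := by
  funext C; unfold mul'
  simp [show ∀ A, (0 : Dl p q) A = 0 from fun _ => rfl]

theorem left_distrib' (U V W : Dl p q) : mul' U (V + W) = mul' U V + mul' U W := by
  funext C
  show ∑ A : Finset (Fin (p+q)), sgn p A (A ∆ C) * U A * (V (A ∆ C) + W (A ∆ C))
      = mul' U V C + mul' U W C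
  unfold mul'
  rw [← Finset.sum_add_distrib]
  exact Finset.sum_congr rfl fun A _ => by ring

theorem right_distrib' (U V W : Dl p q) : mul' (U + V) W = mul' U W + mul' V W := by
  funext C
  show ∑ A : Finset (Fin (p+q)), sgn p A (A ∆ C) * (U A + V A) * W (A ∆ C)
      = mul' U W C + mul' V W C
  unfold mul'
  rw [← Finset.sum_add_distrib]
  exact Finset.sum_congr rfl fun A _ => by ring

instance : CommRing (Dl p q) :=
  { (inferInstance : AddCommGroup (Dl p q)) with
    mul := mul'
    one := one'
    left_distrib := left_distrib'
    right_distrib := right_distrib'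
    zero_mul := zero_mul'
    mul_zero := mul_zero'
    mul_assoc := mul_assoc'
    one_mul := one_mul'
    mul_one := mul_one'
    mul_comm := mul_comm' }

lemma mul_def (U V : Dl p q) : U * V = mul' U V := rfl
lemma one_def : (1 : Dl p q) = one' := rfl

instance : Algebra ℝ (Dl p q) :=
  Algebra.ofModule
    (fun r U V => by
      funext C
      show ∑ A : Finset (Fin (p+q)), sgn p A (A ∆ C) * (r * U A) * V (A ∆ C)
          = r * ∑ A : Finset (Fin (p+q)), sgn p A (A ∆ C) * U A * V (A ∆ C)
      rw [Finset.mul_sum]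
      exact Finset.sum_congr rfl fun A _ => by ring)
    (fun r U V => by
      funext C
      show ∑ A : Finset (Fin (p+q)), sgn p A (A ∆ C) * U A * (r * V (A ∆ C))
          = r * ∑ A : Finset (Fin (p+q)), sgn p A (A ∆ C) * U A * V (A ∆ C)
      rw [Finset.mul_sum]
      exact Finset.sum_congr rfl fun A _ => by ring)

/-- The coefficient of the basis element `e_A` in `U`. -/
def coeff (U : Dl p q) (A : Finset (Fin (p + q))) : ℝ := U A

/-- The basis element `e_A`. -/
def e (A : Finset (Fin (p + q))) : Dl p q := fun B => if B = A then 1 else 0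

/-- The conjugation negating the generator `e_l`. -/
def conj (l : Fin (p + q)) (U : Dl p q) : Dl p q :=
  fun A => if l ∈ A then -U A else U A

/-- The superposition of the conjugations `(·)^{(i)}` over all `i ∈ S`:
it multiplies the coefficient of `e_B` by `(-1)^{|S ∩ B|}`. -/
def conjS (S : Finset (Fin (p + q))) (U : Dl p q) : Dl p q :=
  fun B => (-1 : ℝ) ^ (S ∩ B).card * U B

/-- The regular (left multiplication) representation of `D_{p,q}`. -/
def rep (U : Dl p q) : Matrix (Finset (Fin (p + q))) (Finset (Fin (p + q))) ℝ :=
  fun C B => coeff (U * e B) C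

/-- The determinant of an element of `D_{p,q}`. -/
def Det (U : Dl p q) : ℝ := (rep U).det

/-- The adjoint: product of all conjugates of `U` other than `U` itself. -/
def Adj (U : Dl p q) : Dl p q := ∏ A ∈ Finset.univ.erase (∅ : Finset (Fin (p + q))), conjS A U

end Dl

lemma Finset.sum_eq_zero_of_symmDiff_eq_neg {α M : Type*} [Fintype α] [DecidableEq α]
    [AddCommGroup M] {A : Finset α} (hA : A.Nonempty) (f : Finset α → M)
    (hf : ∀ B, f (B ∆ A) = -f B) : ∑ B, f B = 0 :=
  Finset.sum_ninvolution (· ∆ A) (fun B => by rw [hf, add_neg_cancel])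
    (fun B _ h => hA.ne_empty (symmDiff_eq_left.mp h)) (fun _ => mem_univ _)
    (fun B => symmDiff_symmDiff_cancel_right A B)

lemma sgn_comm (p : ℕ) {n : ℕ} (A B : Finset (Fin n)) : sgn p A B = sgn p B A := by
  rw [sgn, sgn, inter_comm]

namespace Dl

variable {p q : ℕ}

lemma coeff_mul (U V : Dl p q) (C : Finset (Fin (p + q))) :
    coeff (U * V) C = ∑ A, sgn p A (A ∆ C) * U A * V (A ∆ C) := rfl

lemma mul_conj_apply_symmDiff {k : Fin (p + q)} {A : Finset (Fin (p + q))} (hk : k ∈ A)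
    (U : Dl p q) (B : Finset (Fin (p + q))) :
    U (B ∆ A) * conj k U B = -(U B * conj k U (B ∆ A)) := by
  have hkB : k ∈ B ∆ A ↔ k ∉ B := by simp [mem_symmDiff, hk]
  by_cases h : k ∈ B
  · simp [conj, h, hkB, mul_comm]
  · simp [conj, h, hkB.mpr h, mul_comm]

end Dl

/-- `U · U^{(k)}` has no terms involving the generator `e_k`: the coefficient
of `e_A` in `U · U^{(k)}` vanishes whenever `k ∈ A`. -/
theorem mul_conj_no_ek (p q : ℕ) (U : Dl p q) (k : Fin (p + q))
    (A : Finset (Fin (p + q))) (hk : k ∈ A) :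
    Dl.coeff (U * Dl.conj k U) A = 0 := by
  rw [Dl.coeff_mul]
  refine Finset.sum_eq_zero_of_symmDiff_eq_neg ⟨k, hk⟩ _ fun B => ?_
  rw [symmDiff_symmDiff_cancel_right, sgn_comm, mul_assoc, mul_assoc,
    Dl.mul_conj_apply_symmDiff hk, mul_neg]
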